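/- Let F be a minimum-weight constrained spanning forest of a metric MDMTSP instance (G, D, w) with d = |D|, let T* be an optimal tour, let A ⊆ F be an augmenting set of at most d − 1 edges each joining distinct subtours of T* such that every component of T* ∪̇ 2A has an even number of odd-F-degree nodes, and suppose every edge of A is ε-light, i.e., w(e) ≤ (ε/d)·w(F) for all e ∈ A. Then there exists a tour of (G, D, w) of weight at most (3/2 + ε)·OPT, namely F ∪̇ J for a suitable U-join J. -/

import Mathlib

open scoped Classical
open scoped symmDiff

noncomputable def deg {V : Type*} (E : Multiset (Sym2 V)) (v : V) : ℕ :=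
  (E.filter (fun e => v ∈ e)).card

def Connects {V : Type*} (E : Multiset (Sym2 V)) : V → V → Prop :=
  Relation.ReflTransGen (fun a b => s(a, b) ∈ E)

noncomputable def mweight {V : Type*} (w : Sym2 V → ℝ) (E : Multiset (Sym2 V)) : ℝ :=
  (E.map w).sum

def IsMetric {V : Type*} (w : Sym2 V → ℝ) : Prop :=
  (∀ e, 0 ≤ w e) ∧ ∀ a b c : V, w s(a, c) ≤ w s(a, b) + w s(b, c)

def IsTour {V : Type*} (D : Finset V) (T : Multiset (Sym2 V)) : Prop :=
  (∀ e ∈ T, ¬ Sym2.IsDiag e) ∧ (∀ v, Even (deg T v)) ∧ ∀ v, ∃ d ∈ D, Connects T v d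

def IsCSF {V : Type*} (D : Finset V) (F : Finset (Sym2 V)) : Prop :=
  (∀ e ∈ F, ¬ Sym2.IsDiag e) ∧
  (SimpleGraph.fromEdgeSet (↑F : Set (Sym2 V))).IsAcyclic ∧
  ∀ v, ∃ d ∈ D, Connects F.val v d

def IsPM {V : Type*} (U : Finset V) (M : Multiset (Sym2 V)) : Prop :=
  (∀ e ∈ M, ¬ Sym2.IsDiag e) ∧ ∀ v, deg M v = if v ∈ U then 1 else 0

def IsRPPSol {V : Type*} (R J : Multiset (Sym2 V)) : Prop :=
  (∀ e ∈ J, ¬ Sym2.IsDiag e) ∧ (∀ v, Even (deg (R + J) v)) ∧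
  ∀ u v : V, (∃ e ∈ R + J, u ∈ e) → (∃ e ∈ R + J, v ∈ e) → Connects (R + J) u v

section Helpers

variable {V : Type*}

lemma deg_add (E E' : Multiset (Sym2 V)) (v : V) : deg (E + E') v = deg E v + deg E' v := by
  simp [deg, Multiset.filter_add]

lemma connects_mono {E E' : Multiset (Sym2 V)} (h : ∀ e ∈ E, e ∈ E') {a b : V}
    (hab : Connects E a b) : Connects E' a b :=
  Relation.ReflTransGen.mono (fun x y hxy => h _ hxy) _ _ hab

lemma connects_symm {E : Multiset (Sym2 V)} {a b : V} (h : Connects E a b) : Connects E b a :=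
  (@Relation.ReflTransGen.symmetric _ (fun a b => s(a, b) ∈ E) ⟨fun x y hxy => by rwa [Sym2.eq_swap]⟩).symm _ _ h

lemma connects_trans {E : Multiset (Sym2 V)} {a b c : V}
    (h1 : Connects E a b) (h2 : Connects E b c) : Connects E a c :=
  Relation.ReflTransGen.trans h1 h2

lemma deg_finset (S : Finset (Sym2 V)) (v : V) :
    deg S.val v = (S.filter (fun e => v ∈ e)).card := rfl

lemma filter_symmDiff' (S T : Finset (Sym2 V)) (p : Sym2 V → Prop) :
    (S ∆ T).filter p = (S.filter p) ∆ (T.filter p) := by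
  ext e
  simp only [Finset.mem_filter, Finset.mem_symmDiff]
  tauto

lemma odd_card_symmDiff {α : Type*} (s t : Finset α) :
    Odd ((s ∆ t).card) ↔ ((Odd s.card) ↔ ¬ Odd t.card) := by
  have h1 : s ∆ t = (s ∪ t) \ (s ∩ t) := by
    ext x; simp only [Finset.mem_symmDiff, Finset.mem_sdiff, Finset.mem_union, Finset.mem_inter]
    tauto
  have h2 : (s ∩ t) ⊆ (s ∪ t) := Finset.inter_subset_left.trans Finset.subset_union_left
  have h3 := Finset.card_sdiff_of_subset h2
  have h4 := Finset.card_union_add_card_inter s t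
  have h5 : (s ∩ t).card ≤ (s ∪ t).card := Finset.card_le_card h2
  rw [h1, h3]
  simp only [Nat.odd_iff] at *
  omega

lemma odd_deg_symmDiff (S T : Finset (Sym2 V)) (v : V) :
    Odd (deg (S ∆ T).val v) ↔ ((Odd (deg S.val v)) ↔ ¬ Odd (deg T.val v)) := by
  rw [deg_finset, deg_finset, deg_finset]
  have h : (S ∆ T).filter (fun e => v ∈ e)
      = (S.filter (fun e => v ∈ e)) ∆ (T.filter (fun e => v ∈ e)) := by
    ext e
    simp only [Finset.mem_filter, Finset.mem_symmDiff]
    tauto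
  rw [h]
  convert odd_card_symmDiff (S.filter (fun e => v ∈ e)) (T.filter (fun e => v ∈ e)) using 3 <;>
    · ext x
      simp [Finset.mem_symmDiff]

lemma odd_deg_singleton (e : Sym2 V) (v : V) :
    Odd (deg ({e} : Finset (Sym2 V)).val v) ↔ v ∈ e := by
  have : deg ({e} : Finset (Sym2 V)).val v = if v ∈ e then 1 else 0 := by
    simp only [deg, Finset.singleton_val, Multiset.filter_singleton]
    split <;> simp
  rw [this]
  split <;> simp_all

lemma exists_pairjoin (E : Multiset (Sym2 V)) (hE : ∀ e ∈ E, ¬ e.IsDiag) {a b : V}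
    (h : Connects E a b) :
    ∃ S : Finset (Sym2 V), (∀ e ∈ S, e ∈ E) ∧
      ∀ v, (Odd (deg S.val v) ↔ ((v = a ∧ v ≠ b) ∨ (v = b ∧ v ≠ a))) := by
  have h' : Relation.ReflTransGen (fun x y => s(x, y) ∈ E) a b := h
  clear h
  induction h' with
  | refl => exact ⟨∅, by simp, by simp [deg]⟩
  | @tail p q hap hpq ih =>
    obtain ⟨S, hSE, hSdeg⟩ := ih
    have hpqne : p ≠ q := by
      intro hcon
      exact hE _ hpq (by simp [hcon, Sym2.isDiag_iff_proj_eq])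
    refine ⟨S ∆ {s(p, q)}, ?_, ?_⟩
    · intro e he
      rcases Finset.mem_symmDiff.mp he with ⟨h1, _⟩ | ⟨h1, _⟩
      · exact hSE _ h1
      · rw [Finset.mem_singleton] at h1; rw [h1]; exact hpq
    · intro v
      rw [odd_deg_symmDiff, hSdeg, odd_deg_singleton, Sym2.mem_iff]
      by_cases hvp : v = p <;> by_cases hvq : v = q <;> by_cases hva : v = a <;>
        subst_vars <;> simp_all <;> tauto

lemma exists_join (E : Multiset (Sym2 V)) (hE : ∀ e ∈ E, ¬ e.IsDiag) :
    ∀ (U : Finset V),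
    (∀ v, Even ((U.filter (fun u => Connects E v u)).card)) →
    ∃ S : Finset (Sym2 V), (∀ e ∈ S, e ∈ E) ∧ ∀ v, (Odd (deg S.val v) ↔ v ∈ U) := by
  intro U
  induction U using Finset.strongInduction with
  | _ U ih =>
    intro hpar
    rcases Finset.eq_empty_or_nonempty U with rfl | ⟨u, hu⟩
    · exact ⟨∅, by simp, by simp [deg]⟩
    · have h1 : u ∈ U.filter (fun x => Connects E u x) :=
        Finset.mem_filter.mpr ⟨hu, Relation.ReflTransGen.refl⟩
      have heven := hpar u
      have h2 : ∃ u' ∈ U.filter (fun x => Connects E u x), u' ≠ u := by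
        by_contra hcon
        push_neg at hcon
        have hsing : U.filter (fun x => Connects E u x) = {u} :=
          Finset.eq_singleton_iff_unique_mem.mpr ⟨h1, fun x hx => hcon x hx⟩
        rw [hsing] at heven
        simp at heven
      obtain ⟨u', hu'mem, hne⟩ := h2
      obtain ⟨hu'U, hconn⟩ := Finset.mem_filter.mp hu'mem
      obtain ⟨S₀, hS₀E, hS₀deg⟩ := exists_pairjoin E hE hconn
      set U' := (U.erase u).erase u' with hU'
      have hU'sub : U' ⊂ U := by
        apply Finset.ssubset_of_subset_of_ssubset
        · exact Finset.erase_subset _ _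
        · exact Finset.erase_ssubset hu
      have hmemU' : ∀ v, v ∈ U' ↔ (v ∈ U ∧ v ≠ u ∧ v ≠ u') := by
        intro v
        simp only [hU', Finset.mem_erase]
        tauto
      have hpar' : ∀ v, Even ((U'.filter (fun x => Connects E v x)).card) := by
        intro v
        have hfe : U'.filter (fun x => Connects E v x)
            = ((U.filter (fun x => Connects E v x)).erase u).erase u' := by
          ext x
          simp only [Finset.mem_filter, Finset.mem_erase, hmemU']
          tauto
        rw [hfe]
        by_cases hvu : Connects E v u
        · have hvu' : Connects E v u' := connects_trans hvu hconn
          have humem : u ∈ U.filter (fun x => Connects E v x) := Finset.mem_filter.mpr ⟨hu, hvu⟩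
          have hu'mem2 : u' ∈ (U.filter (fun x => Connects E v x)).erase u :=
            Finset.mem_erase.mpr ⟨hne, Finset.mem_filter.mpr ⟨hu'U, hvu'⟩⟩
          rw [Finset.card_erase_of_mem hu'mem2, Finset.card_erase_of_mem humem]
          have hc2 : 2 ≤ (U.filter (fun x => Connects E v x)).card := by
            apply Finset.one_lt_card.mpr
            exact ⟨u', Finset.mem_filter.mpr ⟨hu'U, hvu'⟩, u, humem, hne⟩
          have := hpar v
          rw [Nat.even_iff] at *
          omega
        · have hvu' : ¬ Connects E v u' := by
            intro hcon
            exact hvu (connects_trans hcon (connects_symm hconn))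
          rw [Finset.erase_eq_of_notMem, Finset.erase_eq_of_notMem]
          · exact hpar v
          · simp only [Finset.mem_filter]; tauto
          · simp only [Finset.mem_erase, Finset.mem_filter]; tauto
      obtain ⟨S₁, hS₁E, hS₁deg⟩ := ih U' hU'sub hpar'
      refine ⟨S₀ ∆ S₁, ?_, ?_⟩
      · intro e he
        rcases Finset.mem_symmDiff.mp he with ⟨he1, _⟩ | ⟨he1, _⟩
        · exact hS₀E _ he1
        · exact hS₁E _ he1
      · intro v
        rw [odd_deg_symmDiff, hS₀deg, hS₁deg, hmemU']
        have hneu : u ≠ u' := fun hcon => hne hcon.symm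
        by_cases hvu : v = u <;> by_cases hvu' : v = u' <;> subst_vars <;> simp_all <;> tauto

end Helpers
section CSF

variable {V : Type*}

lemma connects_erase {G : Finset (Sym2 V)} {x y : V}
    (hxy : Connects (G.erase s(x, y)).val x y)
    {a b : V} (h : Connects G.val a b) : Connects (G.erase s(x, y)).val a b := by
  have h' : Relation.ReflTransGen (fun p q => s(p, q) ∈ G.val) a b := h
  clear h
  induction h' with
  | refl => exact Relation.ReflTransGen.refl
  | @tail p q hap hpq ih =>
    have ih' := ih
    by_cases he : s(p, q) = s(x, y)
    · have hpq' : Connects (G.erase s(x, y)).val p q := by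
        rcases Sym2.eq_iff.mp he with ⟨rfl, rfl⟩ | ⟨rfl, rfl⟩
        · exact hxy
        · exact connects_symm hxy
      exact connects_trans ih' hpq'
    · exact ih'.tail (by
        rw [Finset.mem_val, Finset.mem_erase]
        exact ⟨he, hpq⟩)

lemma exists_csf_of_tour [Fintype V] (D : Finset V) (w : Sym2 V → ℝ) (hw0 : ∀ e, 0 ≤ w e)
    (T : Multiset (Sym2 V)) (hT : IsTour D T) :
    ∃ F₂ : Finset (Sym2 V), IsCSF D F₂ ∧ ∑ e ∈ F₂, w e ≤ mweight w T := by
  set P : Finset (Sym2 V) → Prop :=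
    fun G => G ⊆ T.toFinset ∧ ∀ v, ∃ dep ∈ D, Connects G.val v dep with hP
  have hPT : P T.toFinset := by
    refine ⟨Finset.Subset.refl _, fun v => ?_⟩
    obtain ⟨dep, hdep, hconn⟩ := hT.2.2 v
    exact ⟨dep, hdep, connects_mono (fun e he => by simpa using he) hconn⟩
  obtain ⟨G, hG, hGmin⟩ := Finset.exists_min_image
    ((Finset.univ : Finset (Finset (Sym2 V))).filter P) Finset.card
    ⟨T.toFinset, Finset.mem_filter.mpr ⟨Finset.mem_univ _, hPT⟩⟩
  obtain ⟨-, hGsub, hGconn⟩ := Finset.mem_filter.mp hG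
  have hGdiag : ∀ e ∈ G, ¬ e.IsDiag := fun e he =>
    hT.1 e (Multiset.mem_toFinset.mp (hGsub he))
  have hacyc : (SimpleGraph.fromEdgeSet (↑G : Set (Sym2 V))).IsAcyclic := by
    by_contra hac
    rw [SimpleGraph.isAcyclic_iff_forall_adj_isBridge] at hac
    push_neg at hac
    obtain ⟨x, y, hadj, hnb⟩ := hac
    have hmem : s(x, y) ∈ G := by
      have := ((SimpleGraph.fromEdgeSet_adj _).mp hadj).1
      simpa using this
    have hreach : ((SimpleGraph.fromEdgeSet (↑G : Set (Sym2 V))) \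
        SimpleGraph.fromEdgeSet {s(x, y)}).Reachable x y := by
      rw [SimpleGraph.isBridge_iff] at hnb
      push_neg at hnb
      exact hnb
    have hxy : Connects (G.erase s(x, y)).val x y := by
      have := (SimpleGraph.reachable_iff_reflTransGen _ _).mp hreach
      refine Relation.ReflTransGen.mono ?_ _ _ this
      intro a b hab
      rw [SimpleGraph.sdiff_adj] at hab
      obtain ⟨hab1, hab2⟩ := hab
      have h1 : s(a, b) ∈ G := by
        have := ((SimpleGraph.fromEdgeSet_adj _).mp hab1).1
        simpa using this
      have hne : a ≠ b := ((SimpleGraph.fromEdgeSet_adj _).mp hab1).2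
      have h2 : s(a, b) ≠ s(x, y) := by
        intro hcon
        exact hab2 ((SimpleGraph.fromEdgeSet_adj _).mpr ⟨by simp [hcon], hne⟩)
      rw [Finset.mem_val, Finset.mem_erase]
      exact ⟨h2, h1⟩
    have hG' : P (G.erase s(x, y)) := by
      refine ⟨(Finset.erase_subset _ _).trans hGsub, fun v => ?_⟩
      obtain ⟨dep, hdep, hconn⟩ := hGconn v
      exact ⟨dep, hdep, connects_erase hxy hconn⟩
    have hlt : (G.erase s(x, y)).card < G.card := Finset.card_erase_lt_of_mem hmem
    have := hGmin _ (Finset.mem_filter.mpr ⟨Finset.mem_univ _, hG'⟩)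
    omega
  refine ⟨G, ⟨hGdiag, hacyc, hGconn⟩, ?_⟩
  have h1 : ∑ e ∈ G, w e ≤ ∑ e ∈ T.toFinset, w e :=
    Finset.sum_le_sum_of_subset_of_nonneg hGsub (fun e _ _ => hw0 e)
  have h2 : ∑ e ∈ T.toFinset, w e ≤ mweight w T := by
    rw [mweight, Finset.sum_multiset_map_count]
    apply Finset.sum_le_sum
    intro e he
    have hc : 1 ≤ T.count e := Multiset.one_le_count_iff_mem.mpr (Multiset.mem_toFinset.mp he)
    rw [nsmul_eq_mul]
    nlinarith [hw0 e, (by exact_mod_cast hc : (1 : ℝ) ≤ (T.count e : ℝ))]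
  linarith

end CSF
theorem stmt18 {V : Type*} [Fintype V] (D : Finset V) (w : Sym2 V → ℝ) (hw : IsMetric w)
    (d : ℕ) (hd : D.card = d) (hd1 : 0 < d) (ε : ℝ) (hε : 0 < ε)
    (F : Finset (Sym2 V)) (hF : IsCSF D F)
    (hFmin : ∀ F₂, IsCSF D F₂ → ∑ e ∈ F, w e ≤ ∑ e ∈ F₂, w e)
    (Tstar : Multiset (Sym2 V)) (hT : IsTour D Tstar)
    (hTmin : ∀ T', IsTour D T' → mweight w Tstar ≤ mweight w T')
    (A : Finset (Sym2 V)) (hAF : A ⊆ F) (hAcard : A.card ≤ d - 1)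
    (hAjoin : ∀ e ∈ A, ∀ u v : V, e = s(u, v) → ¬ Connects Tstar u v)
    (hparity : ∀ v : V,
      Even {u | Connects (Tstar + A.val + A.val) v u ∧ Odd (deg F.val u)}.ncard)
    (hlight : ∀ e ∈ A, w e ≤ ε / d * ∑ a ∈ F, w a) :
    ∃ J : Multiset (Sym2 V), IsTour D (F.val + J) ∧
      mweight w (F.val + J) ≤ (3 / 2 + ε) * mweight w Tstar := by
  classical
  set E : Multiset (Sym2 V) := Tstar + A.val + A.val with hE
  have hEdiag : ∀ e ∈ E, ¬ e.IsDiag := by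
    intro e he
    rw [hE, Multiset.mem_add, Multiset.mem_add] at he
    rcases he with (he | he) | he
    · exact hT.1 e he
    · exact hF.1 e (hAF he)
    · exact hF.1 e (hAF he)
  set U : Finset V := Finset.univ.filter (fun u => Odd (deg F.val u)) with hU
  have hpar : ∀ v, Even ((U.filter (fun u => Connects E v u)).card) := by
    intro v
    have hs : {u | Connects E v u ∧ Odd (deg F.val u)}
        = ↑(U.filter (fun u => Connects E v u)) := by
      ext u
      simp only [Set.mem_setOf_eq, Finset.coe_filter, hU, Finset.mem_filter, Finset.mem_univ,
        true_and, Set.mem_setOf_eq]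
      tauto
    have := hparity v
    rw [hs, Set.ncard_coe_finset] at this
    exact this
  obtain ⟨S, hSE, hSdeg⟩ := exists_join E hEdiag U hpar
  have hSdeg' : ∀ v, (Odd (deg S.val v) ↔ Odd (deg F.val v)) := by
    intro v
    rw [hSdeg v, hU]
    simp
  -- S.val is a submultiset of E
  have hSle : S.val ≤ E := by
    rw [Multiset.le_iff_count]
    intro e
    by_cases he : e ∈ S
    · have h1 : S.val.count e = 1 := Multiset.count_eq_one_of_mem S.nodup he
      rw [h1]
      exact Multiset.one_le_count_iff_mem.mpr (hSE e he)
    · have h1 : S.val.count e = 0 := Multiset.count_eq_zero_of_notMem he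
      rw [h1]
      exact Nat.zero_le _
  have hsplit : S.val + (E - S.val) = E := by
    rw [add_comm]
    exact tsub_add_cancel_of_le hSle
  have hdegE : ∀ v, deg E v = deg S.val v + deg (E - S.val) v := by
    intro v
    conv_lhs => rw [← hsplit]
    exact deg_add _ _ _
  have hdegEeven : ∀ v, Even (deg E v) := by
    intro v
    rw [hE, deg_add, deg_add]
    rcases hT.2.1 v with ⟨k, hk⟩
    exact ⟨k + deg A.val v, by omega⟩
  have hdeg2 : ∀ v, (Odd (deg (E - S.val) v) ↔ Odd (deg F.val v)) := by
    intro v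
    rw [← hSdeg' v]
    have h1 := hdegE v
    have h2 := hdegEeven v
    rw [Nat.even_iff] at h2
    rw [Nat.odd_iff, Nat.odd_iff]
    omega
  have hmw_add : ∀ M N : Multiset (Sym2 V), mweight w (M + N) = mweight w M + mweight w N := by
    intro M N
    simp [mweight, Multiset.map_add, Multiset.sum_add]
  have hmw_split : mweight w S.val + mweight w (E - S.val) = mweight w E := by
    rw [← hmw_add, hsplit]
  -- choose the lighter of the two joins
  set J : Multiset (Sym2 V) :=
    if mweight w S.val ≤ mweight w (E - S.val) then S.val else E - S.val with hJ
  have hJmem : ∀ e ∈ J, e ∈ E := by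
    intro e he
    rw [hJ] at he
    split at he
    · exact hSE e he
    · exact Multiset.mem_of_le (Multiset.sub_le_self _ _) he
  have hJdeg : ∀ v, (Odd (deg J v) ↔ Odd (deg F.val v)) := by
    intro v
    rw [hJ]
    split
    · exact hSdeg' v
    · exact hdeg2 v
  have hJw : mweight w J ≤ mweight w E / 2 := by
    rw [hJ]
    split <;> linarith [hmw_split]
  -- numbers
  set OPT : ℝ := mweight w Tstar with hOPT
  set wF : ℝ := ∑ e ∈ F, w e with hwF
  set sA : ℝ := ∑ e ∈ A, w e with hsA
  have hOPT0 : 0 ≤ OPT := by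
    rw [hOPT, mweight]
    apply Multiset.sum_nonneg
    intro x hx
    obtain ⟨e, _, rfl⟩ := Multiset.mem_map.mp hx
    exact hw.1 e
  have hwF0 : 0 ≤ wF := Finset.sum_nonneg (fun e _ => hw.1 e)
  have hwFOPT : wF ≤ OPT := by
    obtain ⟨F₂, hF₂, hF₂w⟩ := exists_csf_of_tour D w hw.1 Tstar hT
    exact le_trans (hFmin F₂ hF₂) hF₂w
  have hmwA : mweight w A.val = sA := by
    rw [hsA, mweight, Finset.sum_eq_multiset_sum]
  have hmwE : mweight w E = OPT + sA + sA := by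
    rw [hE, hmw_add, hmw_add, hmwA, hOPT]
  have hd0 : (0 : ℝ) < (d : ℝ) := by exact_mod_cast hd1
  have hsAbound : sA ≤ ε * OPT := by
    have h1 : sA ≤ A.card • (ε / d * wF) := Finset.sum_le_card_nsmul _ _ _ (fun e he => hlight e he)
    have hcard : (A.card : ℝ) ≤ (d : ℝ) - 1 := by
      have : (A.card : ℝ) ≤ ((d - 1 : ℕ) : ℝ) := by exact_mod_cast hAcard
      rw [Nat.cast_sub hd1] at this
      simpa using this
    have h2 : (A.card : ℝ) * (ε / d * wF) ≤ ((d : ℝ) - 1) * (ε / d * wF) := by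
      apply mul_le_mul_of_nonneg_right hcard
      positivity
    have h3 : ((d : ℝ) - 1) * (ε / d * wF) ≤ ε * wF := by
      rw [div_mul_eq_mul_div, mul_div_assoc']
      rw [div_le_iff₀ hd0]
      nlinarith
    have h4 : ε * wF ≤ ε * OPT := by nlinarith
    rw [nsmul_eq_mul] at h1
    linarith
  refine ⟨J, ⟨?_, ?_, ?_⟩, ?_⟩
  · intro e he
    rw [Multiset.mem_add] at he
    rcases he with he | he
    · exact hF.1 e he
    · exact hEdiag e (hJmem e he)
  · intro v
    rw [deg_add]
    have := hJdeg v
    rw [Nat.odd_iff, Nat.odd_iff] at this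
    rw [Nat.even_iff]
    omega
  · intro v
    obtain ⟨dep, hdep, hconn⟩ := hF.2.2 v
    exact ⟨dep, hdep, connects_mono (fun e he => Multiset.mem_add.mpr (Or.inl he)) hconn⟩
  · have hmwF : mweight w F.val = wF := by rw [hwF, mweight, Finset.sum_eq_multiset_sum]
    rw [hmw_add, hmwF]
    have : mweight w J ≤ OPT / 2 + sA := by
      rw [hmwE] at hJw
      linarith
    rw [hOPT] at *
    linarith
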